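/- Suppose d ≥ 0, c ≥ 0 and Assumptions 1–2 hold. Then the union of Φ(u) over all u ∈ Θ_D equals Θ_P, and the union of Ψ(v) over all v ∈ Θ_P equals Θ_D. -/
import Mathlib

set_option linter.unusedSectionVars false
set_option maxHeartbeats 1000000



open Matrix

/-- Assumption 1: the row spaces of `A`, `B`, `M` are pairwise orthogonal
and their (direct) sum is all of `ℝⁿ`. -/
def Assumption1 {m l r n : ℕ} (A : Matrix (Fin m) (Fin n) ℝ)
    (B : Matrix (Fin l) (Fin n) ℝ) (M : Matrix (Fin r) (Fin n) ℝ) : Prop :=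
  (∀ wa wb, (Aᵀ *ᵥ wa) ⬝ᵥ (Bᵀ *ᵥ wb) = 0) ∧
  (∀ wa wm, (Aᵀ *ᵥ wa) ⬝ᵥ (Mᵀ *ᵥ wm) = 0) ∧
  (∀ wb wm, (Bᵀ *ᵥ wb) ⬝ᵥ (Mᵀ *ᵥ wm) = 0) ∧
  (LinearMap.range (Aᵀ).mulVecLin ⊔ LinearMap.range (Bᵀ).mulVecLin ⊔
      LinearMap.range (Mᵀ).mulVecLin = ⊤)

/-- Assumption 2: `M Mᵀ = I`. -/
def Assumption2 {r n : ℕ} (M : Matrix (Fin r) (Fin n) ℝ) : Prop :=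
  M * Mᵀ = 1

/-- Optimality for the LP `min ⟨cost, x⟩ s.t. Ax = Ad, x ≥ 0`. -/
def OptimalFor {m n : ℕ} (A : Matrix (Fin m) (Fin n) ℝ) (d cost x : Fin n → ℝ) : Prop :=
  A *ᵥ x = A *ᵥ d ∧ 0 ≤ x ∧
    ∀ x' : Fin n → ℝ, A *ᵥ x' = A *ᵥ d → 0 ≤ x' → cost ⬝ᵥ x ≤ cost ⬝ᵥ x'

/-- The primal projection polyhedron `Θ_P`. -/
def ThetaP {m r n : ℕ} (A : Matrix (Fin m) (Fin n) ℝ)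
    (M : Matrix (Fin r) (Fin n) ℝ) (d : Fin n → ℝ) : Set (Fin r → ℝ) :=
  {v | ∃ x : Fin n → ℝ, 0 ≤ x ∧ A *ᵥ x = A *ᵥ d ∧ M *ᵥ x = M *ᵥ d + v}

/-- The dual projection polyhedron `Θ_D`. -/
def ThetaD {l r n : ℕ} (B : Matrix (Fin l) (Fin n) ℝ)
    (M : Matrix (Fin r) (Fin n) ℝ) (c : Fin n → ℝ) : Set (Fin r → ℝ) :=
  {u | ∃ y : Fin n → ℝ, 0 ≤ y ∧ B *ᵥ y = B *ᵥ c ∧ M *ᵥ y = M *ᵥ c + u}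

/-- The set-valued mapping `Φ(u) = {M(x* - d) : x* optimal for the OFD-perturbed primal}`. -/
def Phi {m r n : ℕ} (A : Matrix (Fin m) (Fin n) ℝ) (M : Matrix (Fin r) (Fin n) ℝ)
    (c d : Fin n → ℝ) (u : Fin r → ℝ) : Set (Fin r → ℝ) :=
  {v | ∃ x : Fin n → ℝ, OptimalFor A d (c + Mᵀ *ᵥ u) x ∧ v = M *ᵥ (x - d)}

/-- The set-valued mapping `Ψ(v) = {M(y* - c) : y* optimal for the OFD-perturbed dual}`. -/
def Psi {l r n : ℕ} (B : Matrix (Fin l) (Fin n) ℝ) (M : Matrix (Fin r) (Fin n) ℝ)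
    (c d : Fin n → ℝ) (v : Fin r → ℝ) : Set (Fin r → ℝ) :=
  {u | ∃ y : Fin n → ℝ, OptimalFor B c (d + Mᵀ *ᵥ v) y ∧ u = M *ᵥ (y - c)}



section Cone

variable {ι κ : Type*} [Fintype ι] [Fintype κ] [DecidableEq ι] [DecidableEq κ]

/-- The convex cone generated by the finite family `g`. -/
def coneSet (g : ι → κ → ℝ) : Set (κ → ℝ) :=
  {z | ∃ x : ι → ℝ, 0 ≤ x ∧ ∑ i, x i • g i = z}

/-- Kernel-form linear independence of the subfamily indexed by `S`. -/
def Ind (g : ι → κ → ℝ) (S : Finset ι) : Prop :=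
  ∀ z : ι → ℝ, (∀ i ∉ S, z i = 0) → ∑ i, z i • g i = 0 → z = 0

lemma carath_aux (g : ι → κ → ℝ) :
    ∀ N (x : ι → ℝ), 0 ≤ x → (Finset.univ.filter (fun i => x i ≠ 0)).card ≤ N →
      ∃ x' : ι → ℝ, 0 ≤ x' ∧ ∑ i, x' i • g i = ∑ i, x i • g i ∧
        Ind g (Finset.univ.filter (fun i => x' i ≠ 0)) := by
  intro N
  induction N with
  | zero =>
    intro x hx hcard
    refine ⟨x, hx, rfl, ?_⟩
    have he : Finset.univ.filter (fun i => x i ≠ 0) = ∅ :=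
      Finset.card_eq_zero.mp (Nat.le_zero.mp hcard)
    rw [he]
    intro z hz _
    funext i
    exact hz i (Finset.notMem_empty i)
  | succ N ih =>
    intro x hx hcard
    by_cases hInd : Ind g (Finset.univ.filter fun i => x i ≠ 0)
    · exact ⟨x, hx, rfl, hInd⟩
    · unfold Ind at hInd
      push_neg at hInd
      obtain ⟨z, hzsupp, hzsum, hz0⟩ := hInd
      have hzsupp' : ∀ i, x i = 0 → z i = 0 := by
        intro i hxi
        exact hzsupp i (by simp [hxi])
      obtain ⟨w, hwsupp, hwsum, i₀, hi₀⟩ :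
          ∃ w : ι → ℝ, (∀ i, x i = 0 → w i = 0) ∧ (∑ i, w i • g i = 0) ∧ ∃ i, 0 < w i := by
        by_cases hpos : ∃ i, 0 < z i
        · exact ⟨z, hzsupp', hzsum, hpos⟩
        · push_neg at hpos
          obtain ⟨i₁, hi₁⟩ : ∃ i, z i ≠ 0 := Function.ne_iff.mp hz0
          refine ⟨-z, fun i hi => by simp [hzsupp' i hi], ?_, i₁, ?_⟩
          · have : ∑ i, (-z) i • g i = -∑ i, z i • g i := by
              simp [neg_smul, Finset.sum_neg_distrib]
            rw [this, hzsum, neg_zero]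
          · have := lt_of_le_of_ne (hpos i₁) hi₁
            simpa using this
      set T := Finset.univ.filter (fun i => 0 < w i) with hT
      have hTne : T.Nonempty := ⟨i₀, by simp [hT, hi₀]⟩
      obtain ⟨j, hjT, hjmin⟩ := T.exists_min_image (fun i => x i / w i) hTne
      have hwj : 0 < w j := by simpa [hT] using hjT
      set t := x j / w j with ht
      have ht0 : 0 ≤ t := div_nonneg (hx j) hwj.le
      set x'' : ι → ℝ := fun i => x i - t * w i with hx''
      have hx''0 : 0 ≤ x'' := by
        intro i
        by_cases hwi : 0 < w i
        · have hmin := hjmin i (by simp [hT, hwi])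
          have : t * w i ≤ x i := by
            rw [← le_div_iff₀ hwi]
            exact hmin
          simpa [hx''] using sub_nonneg.mpr this
        · have h1 : t * w i ≤ 0 := mul_nonpos_of_nonneg_of_nonpos ht0 (not_lt.mp hwi)
          have h2 : (0:ℝ) ≤ x i := hx i
          show (0:ℝ) ≤ x i - t * w i
          linarith
      have hx''sum : ∑ i, x'' i • g i = ∑ i, x i • g i := by
        have h1 : ∑ i, x'' i • g i = ∑ i, (x i • g i - (t * w i) • g i) := by
          simp [hx'', sub_smul]
        rw [h1, Finset.sum_sub_distrib]
        have h2 : ∑ i, (t * w i) • g i = t • ∑ i, w i • g i := by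
          rw [Finset.smul_sum]
          simp [smul_smul]
        rw [h2, hwsum, smul_zero, sub_zero]
      have hxj : x j ≠ 0 := fun h => by
        have := hwsupp j h; rw [this] at hwj; exact lt_irrefl 0 hwj
      have hsub : Finset.univ.filter (fun i => x'' i ≠ 0) ⊆
          (Finset.univ.filter (fun i => x i ≠ 0)).erase j := by
        intro i hi
        simp only [Finset.mem_filter, Finset.mem_univ, true_and] at hi
        refine Finset.mem_erase.mpr ⟨?_, ?_⟩
        · rintro rfl
          apply hi
          simp [hx'', ht, div_mul_cancel₀ _ hwj.ne']
        · simp only [Finset.mem_filter, Finset.mem_univ, true_and]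
          intro hxi
          exact hi (by simp [hx'', hxi, hwsupp i hxi])
      have hcard' : (Finset.univ.filter (fun i => x'' i ≠ 0)).card ≤ N := by
        have h1 := Finset.card_le_card hsub
        have h2 : ((Finset.univ.filter (fun i => x i ≠ 0)).erase j).card
            = (Finset.univ.filter (fun i => x i ≠ 0)).card - 1 :=
          Finset.card_erase_of_mem (by simp [hxj])
        omega
      obtain ⟨x', h1, h2, h3⟩ := ih x'' hx''0 hcard'
      exact ⟨x', h1, h2.trans hx''sum, h3⟩

end Cone

section Cone2

variable {ι κ : Type*} [Fintype ι] [Fintype κ] [DecidableEq ι] [DecidableEq κ]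

lemma isClosed_piece (g : ι → κ → ℝ) (S : Finset ι) (hS : Ind g S) :
    IsClosed ((fun x : ι → ℝ => ∑ i, x i • g i) '' {x | 0 ≤ x ∧ ∀ i ∉ S, x i = 0}) := by
  classical
  set W : Submodule ℝ (ι → ℝ) :=
    { carrier := {x | ∀ i ∉ S, x i = 0}
      add_mem' := fun {a b} ha hb i hi => by
        simp [ha i hi, hb i hi]
      zero_mem' := fun i hi => rfl
      smul_mem' := fun c x hx i hi => by simp [hx i hi] } with hW
  let L : (ι → ℝ) →ₗ[ℝ] (κ → ℝ) :=
    { toFun := fun x => ∑ i, x i • g i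
      map_add' := fun a b => by
        simp [add_smul, Finset.sum_add_distrib]
      map_smul' := fun c a => by
        simp [Finset.smul_sum, smul_smul] }
  let f : W →ₗ[ℝ] (κ → ℝ) := L.comp W.subtype
  have hker : LinearMap.ker f = ⊥ := by
    rw [LinearMap.ker_eq_bot']
    intro x hx
    exact Subtype.ext (hS x.1 x.2 hx)
  have hemb := LinearMap.isClosedEmbedding_of_injective hker
  have hK : IsClosed {x : W | 0 ≤ (x : ι → ℝ)} := by
    have hcl : IsClosed {v : ι → ℝ | 0 ≤ v} := by
      have he : {v : ι → ℝ | 0 ≤ v} = ⋂ i, {v : ι → ℝ | 0 ≤ v i} := by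
        ext v; simp [Pi.le_def]
      rw [he]
      exact isClosed_iInter fun i => isClosed_le continuous_const (continuous_apply i)
    exact hcl.preimage continuous_subtype_val
  have himg : (fun x : ι → ℝ => ∑ i, x i • g i) '' {x | 0 ≤ x ∧ ∀ i ∉ S, x i = 0}
      = f '' {x : W | 0 ≤ (x : ι → ℝ)} := by
    ext z
    constructor
    · rintro ⟨x, ⟨hx0, hxS⟩, rfl⟩
      exact ⟨⟨x, hxS⟩, hx0, rfl⟩
    · rintro ⟨⟨x, hxS⟩, hx0, rfl⟩
      exact ⟨x, ⟨hx0, hxS⟩, rfl⟩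
  rw [himg]
  exact hemb.isClosedMap _ hK

lemma isClosed_coneSet (g : ι → κ → ℝ) : IsClosed (coneSet g) := by
  classical
  have hdecomp : coneSet g = ⋃ (S : Finset ι), ⋃ (_ : Ind g S),
      (fun x : ι → ℝ => ∑ i, x i • g i) '' {x | 0 ≤ x ∧ ∀ i ∉ S, x i = 0} := by
    ext z
    simp only [Set.mem_iUnion, coneSet, Set.mem_setOf_eq, Set.mem_image]
    constructor
    · rintro ⟨x, hx0, rfl⟩
      obtain ⟨x', h0, hsum, hind⟩ := carath_aux g _ x hx0 le_rfl
      refine ⟨_, hind, x', ⟨h0, fun i hi => ?_⟩, hsum⟩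
      simpa using hi
    · rintro ⟨S, hS, x, ⟨h0, _⟩, rfl⟩
      exact ⟨x, h0, rfl⟩
  rw [hdecomp]
  exact isClosed_iUnion_of_finite fun S =>
    isClosed_iUnion_of_finite fun hS => isClosed_piece g S hS

lemma zero_mem_coneSet (g : ι → κ → ℝ) : 0 ∈ coneSet g :=
  ⟨0, le_rfl, by simp⟩

lemma single_mem_coneSet (g : ι → κ → ℝ) (i : ι) : g i ∈ coneSet g := by
  refine ⟨Pi.single i 1, ?_, ?_⟩
  · intro j
    by_cases h : j = i
    · subst h; simp
    · simp [Pi.single_eq_of_ne h]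
  · rw [Finset.sum_eq_single i]
    · simp
    · intro b _ hb
      simp [Pi.single_eq_of_ne hb]
    · intro h
      exact absurd (Finset.mem_univ i) h

lemma smul_mem_coneSet (g : ι → κ → ℝ) {z : κ → ℝ} (hz : z ∈ coneSet g)
    {t : ℝ} (ht : 0 ≤ t) : t • z ∈ coneSet g := by
  obtain ⟨x, hx0, rfl⟩ := hz
  refine ⟨t • x, fun i => mul_nonneg ht (hx0 i), ?_⟩
  rw [Finset.smul_sum]
  simp [smul_smul]

lemma convex_coneSet (g : ι → κ → ℝ) : Convex ℝ (coneSet g) := by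
  rintro z₁ ⟨x₁, h₁, rfl⟩ z₂ ⟨x₂, h₂, rfl⟩ a b ha hb hab
  refine ⟨a • x₁ + b • x₂, ?_, ?_⟩
  · intro i
    exact add_nonneg (mul_nonneg ha (h₁ i)) (mul_nonneg hb (h₂ i))
  · rw [Finset.smul_sum, Finset.smul_sum, ← Finset.sum_add_distrib]
    refine Finset.sum_congr rfl fun i _ => ?_
    simp [add_smul, smul_smul]

theorem farkas_alt (g : ι → κ → ℝ) (b : κ → ℝ)
    (hb : ¬ ∃ x : ι → ℝ, 0 ≤ x ∧ ∑ i, x i • g i = b) :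
    ∃ y : κ → ℝ, (∀ i, 0 ≤ g i ⬝ᵥ y) ∧ b ⬝ᵥ y < 0 := by
  have hbC : b ∉ coneSet g := fun ⟨x, h1, h2⟩ => hb ⟨x, h1, h2⟩
  obtain ⟨f, u, hfC, hub⟩ :=
    geometric_hahn_banach_closed_point (convex_coneSet g) (isClosed_coneSet g) hbC
  have h0u : (0:ℝ) < u := by
    have := hfC 0 (zero_mem_coneSet g)
    simpa using this
  have hle : ∀ z ∈ coneSet g, f z ≤ 0 := by
    intro z hz
    by_contra h
    push_neg at h
    have ht : (0:ℝ) ≤ (u + 1) / f z := div_nonneg (by linarith) h.le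
    have h2 := hfC _ (smul_mem_coneSet g hz ht)
    rw [f.map_smul, smul_eq_mul, div_mul_cancel₀ _ h.ne'] at h2
    linarith
  set y : κ → ℝ := fun k => f (Pi.single k (1:ℝ) : κ → ℝ) with hy
  have hrepr : ∀ z : κ → ℝ, f z = z ⬝ᵥ y := by
    intro z
    have hz : z = ∑ k, z k • (Pi.single k (1:ℝ) : κ → ℝ) := by
      conv_lhs => rw [← Finset.univ_sum_single z]
      refine Finset.sum_congr rfl fun k _ => ?_
      rw [← Pi.single_smul, smul_eq_mul, mul_one]
    calc f z = f (∑ k, z k • (Pi.single k (1:ℝ) : κ → ℝ)) := by rw [← hz]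
      _ = ∑ k, z k * f (Pi.single k (1:ℝ) : κ → ℝ) := by
          rw [map_sum]
          refine Finset.sum_congr rfl fun k _ => ?_
          rw [f.map_smul, smul_eq_mul]
      _ = z ⬝ᵥ y := rfl
  refine ⟨-y, fun i => ?_, ?_⟩
  · have h1 := hle (g i) (single_mem_coneSet g i)
    rw [hrepr] at h1
    simpa [dotProduct_neg] using neg_nonneg.mpr h1
  · have h1 : u < f b := hub
    rw [hrepr] at h1
    have h2 : 0 < b ⬝ᵥ y := lt_trans h0u h1
    simpa [dotProduct_neg] using neg_neg_of_pos h2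

end Cone2

section Main

lemma dotProduct_nonneg' {n : ℕ} {a b : Fin n → ℝ} (ha : 0 ≤ a) (hb : 0 ≤ b) :
    0 ≤ a ⬝ᵥ b :=
  Finset.sum_nonneg fun j _ => mul_nonneg (ha j) (hb j)

lemma mul_transpose_eq_zero {a b n : ℕ} {P : Matrix (Fin a) (Fin n) ℝ}
    {Q : Matrix (Fin b) (Fin n) ℝ}
    (h : ∀ wp wq, (Pᵀ *ᵥ wp) ⬝ᵥ (Qᵀ *ᵥ wq) = 0) : P * Qᵀ = 0 := by
  ext i j
  have hh := h (Pi.single i 1) (Pi.single j 1)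
  simp only [Matrix.mulVec_single, mul_one] at hh
  simp only [Matrix.mul_apply, Matrix.zero_apply, Matrix.transpose_apply]
  simpa [dotProduct, Matrix.transpose_apply] using hh

lemma phi_sub {m r n : ℕ} (A : Matrix (Fin m) (Fin n) ℝ) (M : Matrix (Fin r) (Fin n) ℝ)
    (c d : Fin n → ℝ) (u : Fin r → ℝ) : Phi A M c d u ⊆ ThetaP A M d := by
  rintro v ⟨x, ⟨hxA, hx0, -⟩, rfl⟩
  refine ⟨x, hx0, hxA, ?_⟩
  rw [Matrix.mulVec_sub]
  abel

lemma key {m l r n : ℕ} (A : Matrix (Fin m) (Fin n) ℝ) (B : Matrix (Fin l) (Fin n) ℝ)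
    (M : Matrix (Fin r) (Fin n) ℝ) (c d : Fin n → ℝ) (hc : 0 ≤ c)
    (hBA : B * Aᵀ = 0) (hBM : B * Mᵀ = 0) (hMA : M * Aᵀ = 0) (hMM : M * Mᵀ = 1)
    {v : Fin r → ℝ} (hv : v ∈ ThetaP A M d) :
    ∃ u ∈ ThetaD B M c, v ∈ Phi A M c d u := by
  classical
  obtain ⟨x₀, hx₀0, hx₀A, hx₀M⟩ := hv
  -- Step 1 : attainment of the minimum of ⟨c, x⟩ over {x ≥ 0, Ax = Ax₀, Mx = Mx₀}
  set g₁ : Fin n → ((Fin m ⊕ Fin r) ⊕ Unit) → ℝ :=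
    fun j => Sum.elim (Sum.elim (fun i => A i j) (fun i => M i j)) (fun _ => c j) with hg₁
  have hsum₁ : ∀ x : Fin n → ℝ,
      ∑ j, x j • g₁ j = Sum.elim (Sum.elim (A *ᵥ x) (M *ᵥ x)) (fun _ => c ⬝ᵥ x) := by
    intro x
    funext k
    rw [Finset.sum_apply]
    rcases k with (i | i) | k <;>
      simp [hg₁, Matrix.mulVec, dotProduct, mul_comm]
  set Φf : ℝ → (((Fin m ⊕ Fin r) ⊕ Unit) → ℝ) :=
    fun t => Sum.elim (Sum.elim (A *ᵥ x₀) (M *ᵥ x₀)) (fun _ => t) with hΦf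
  have hmem : ∀ t, Φf t ∈ coneSet g₁ ↔
      ∃ x : Fin n → ℝ, 0 ≤ x ∧ A *ᵥ x = A *ᵥ x₀ ∧ M *ᵥ x = M *ᵥ x₀ ∧ c ⬝ᵥ x = t := by
    intro t
    constructor
    · rintro ⟨x, hx0, hxe⟩
      rw [hsum₁ x] at hxe
      refine ⟨x, hx0, ?_, ?_, ?_⟩
      · funext i; simpa [hΦf] using congrFun hxe (Sum.inl (Sum.inl i))
      · funext i; simpa [hΦf] using congrFun hxe (Sum.inl (Sum.inr i))
      · simpa [hΦf] using congrFun hxe (Sum.inr ())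
    · rintro ⟨x, hx0, h1, h2, h3⟩
      refine ⟨x, hx0, ?_⟩
      rw [hsum₁ x, h1, h2]
      funext k
      rcases k with (i | i) | k <;> simp [hΦf, h3]
  set s : Set ℝ := {t | Φf t ∈ coneSet g₁} with hs
  have hsne : s.Nonempty := ⟨c ⬝ᵥ x₀, (hmem _).mpr ⟨x₀, hx₀0, rfl, rfl, rfl⟩⟩
  have hsbdd : BddBelow s := by
    refine ⟨0, fun t ht => ?_⟩
    obtain ⟨x, hx0, -, -, rfl⟩ := (hmem t).mp ht
    exact dotProduct_nonneg' hc hx0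
  have hscl : IsClosed s := by
    have hc1 : Continuous Φf := by
      refine continuous_pi ?_
      rintro ((i | i) | k) <;> simp only [hΦf, Sum.elim_inl, Sum.elim_inr] <;>
        first
          | exact continuous_const
          | exact continuous_id
    exact (isClosed_coneSet g₁).preimage hc1
  set γ : ℝ := sInf s with hγdef
  have hγs : γ ∈ s := hscl.csInf_mem hsne hsbdd
  obtain ⟨xs, hxs0, hxsA, hxsM, hxsc⟩ := (hmem γ).mp hγs
  have hmin : ∀ x : Fin n → ℝ, 0 ≤ x → A *ᵥ x = A *ᵥ x₀ → M *ᵥ x = M *ᵥ x₀ →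
      γ ≤ c ⬝ᵥ x :=
    fun x h0 h1 h2 => csInf_le hsbdd ((hmem _).mpr ⟨x, h0, h1, h2, rfl⟩)
  -- Step 2 : existence of dual multipliers, via Farkas' lemma
  set g₂ : ((Fin m ⊕ Fin m) ⊕ ((Fin r ⊕ Fin r) ⊕ (Fin n ⊕ Unit))) → (Fin n ⊕ Unit) → ℝ :=
    Sum.elim
      (Sum.elim (fun i => Sum.elim (fun j => A i j) (fun _ => -((A *ᵥ x₀) i)))
                (fun i => Sum.elim (fun j => -(A i j)) (fun _ => (A *ᵥ x₀) i)))
      (Sum.elim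
        (Sum.elim (fun i => Sum.elim (fun j => M i j) (fun _ => -((M *ᵥ x₀) i)))
                  (fun i => Sum.elim (fun j => -(M i j)) (fun _ => (M *ᵥ x₀) i)))
        (Sum.elim (fun j => Sum.elim (Pi.single j 1) (fun _ => 0))
                  (fun _ => Sum.elim (fun _ => 0) (fun _ => 1)))) with hg₂
  set b₂ : (Fin n ⊕ Unit) → ℝ := Sum.elim c (fun _ => -γ) with hb₂
  have hfeas : ∃ xx : ((Fin m ⊕ Fin m) ⊕ ((Fin r ⊕ Fin r) ⊕ (Fin n ⊕ Unit))) → ℝ,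
      0 ≤ xx ∧ ∑ i, xx i • g₂ i = b₂ := by
    by_contra hinf
    obtain ⟨yv, hyv, hbyv⟩ := farkas_alt g₂ b₂ hinf
    set p : Fin n → ℝ := fun j => yv (Sum.inl j) with hp
    set τ : ℝ := yv (Sum.inr ()) with hτ
    have hApτ : ∀ i, (A *ᵥ p) i = (A *ᵥ x₀) i * τ := by
      intro i
      have h1 := hyv (Sum.inl (Sum.inl i))
      have h2 := hyv (Sum.inl (Sum.inr i))
      simp only [hg₂, Sum.elim_inl, Sum.elim_inr, dotProduct,
        Fintype.sum_sum_type, Finset.univ_unique, Finset.sum_singleton, neg_mul] at h1 h2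
      simp only [Matrix.mulVec, dotProduct, ← hp, ← hτ] at h1 h2 ⊢
      simp only [Finset.sum_neg_distrib] at h1 h2
      linarith
    have hMpτ : ∀ i, (M *ᵥ p) i = (M *ᵥ x₀) i * τ := by
      intro i
      have h1 := hyv (Sum.inr (Sum.inl (Sum.inl i)))
      have h2 := hyv (Sum.inr (Sum.inl (Sum.inr i)))
      simp only [hg₂, Sum.elim_inl, Sum.elim_inr, dotProduct,
        Fintype.sum_sum_type, Finset.univ_unique, Finset.sum_singleton, neg_mul] at h1 h2
      simp only [Matrix.mulVec, dotProduct, ← hp, ← hτ] at h1 h2 ⊢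
      simp only [Finset.sum_neg_distrib] at h1 h2
      linarith
    have hp0 : 0 ≤ p := by
      intro j
      have h1 := hyv (Sum.inr (Sum.inr (Sum.inl j)))
      simp only [hg₂, Sum.elim_inl, Sum.elim_inr, dotProduct,
        Fintype.sum_sum_type, Finset.univ_unique, Finset.sum_singleton,
        Pi.single_apply, ite_mul, one_mul, zero_mul, Finset.sum_ite_eq, Finset.sum_ite_eq',
        Finset.mem_univ, if_true, mul_zero, zero_mul, add_zero, ← hp] at h1
      simpa using h1
    have hτ0 : 0 ≤ τ := by
      have h1 := hyv (Sum.inr (Sum.inr (Sum.inr ())))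
      simp only [hg₂, Sum.elim_inl, Sum.elim_inr, dotProduct,
        Fintype.sum_sum_type, Finset.univ_unique, Finset.sum_singleton,
        zero_mul, one_mul, Finset.sum_const_zero, zero_add, ← hτ] at h1
      exact h1
    have hcp : c ⬝ᵥ p - γ * τ < 0 := by
      simp only [hb₂, dotProduct, Fintype.sum_sum_type, Finset.univ_unique,
        Sum.elim_inl, Sum.elim_inr, Finset.sum_singleton, neg_mul, ← hp, ← hτ] at hbyv
      simp only [dotProduct]
      linarith
    rcases eq_or_lt_of_le hτ0 with hτz | hτpos
    · have hAp0 : A *ᵥ p = 0 := funext fun i => by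
        rw [hApτ i, ← hτz, mul_zero]; rfl
      have hMp0 : M *ᵥ p = 0 := funext fun i => by
        rw [hMpτ i, ← hτz, mul_zero]; rfl
      have hγle := hmin (xs + p) (add_nonneg hxs0 hp0)
        (by rw [Matrix.mulVec_add, hAp0, add_zero, hxsA])
        (by rw [Matrix.mulVec_add, hMp0, add_zero, hxsM])
      rw [dotProduct_add, hxsc] at hγle
      rw [← hτz, mul_zero] at hcp
      linarith
    · set x : Fin n → ℝ := τ⁻¹ • p with hx
      have hγle := hmin x (fun j => mul_nonneg (inv_nonneg.mpr hτ0) (hp0 j))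
        (by
          funext i
          rw [hx, Matrix.mulVec_smul]
          simp only [Pi.smul_apply, smul_eq_mul, hApτ i]
          field_simp)
        (by
          funext i
          rw [hx, Matrix.mulVec_smul]
          simp only [Pi.smul_apply, smul_eq_mul, hMpτ i]
          field_simp)
      rw [hx, dotProduct_smul, smul_eq_mul] at hγle
      have h2 : τ * γ ≤ τ * (τ⁻¹ * (c ⬝ᵥ p)) :=
        mul_le_mul_of_nonneg_left hγle hτpos.le
      rw [← mul_assoc, mul_inv_cancel₀ hτpos.ne', one_mul] at h2
      nlinarith
  -- unpack the multipliers
  obtain ⟨xx, hxx0, hxxe⟩ := hfeas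
  set w : Fin m → ℝ := fun i => xx (Sum.inl (Sum.inl i)) - xx (Sum.inl (Sum.inr i)) with hw
  set μ : Fin r → ℝ :=
    fun i => xx (Sum.inr (Sum.inl (Sum.inl i))) - xx (Sum.inr (Sum.inl (Sum.inr i))) with hμ
  set y : Fin n → ℝ := fun j => xx (Sum.inr (Sum.inr (Sum.inl j))) with hy
  set σ : ℝ := xx (Sum.inr (Sum.inr (Sum.inr ()))) with hσ
  have claim1 : ∀ j, (Aᵀ *ᵥ w) j + (Mᵀ *ᵥ μ) j + y j = c j := by
    intro j
    have h := congrFun hxxe (Sum.inl j)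
    rw [Finset.sum_apply] at h
    simp only [hg₂, hb₂, Fintype.sum_sum_type, Sum.elim_inl, Sum.elim_inr,
      Pi.smul_apply, smul_eq_mul, mul_neg, mul_zero, mul_one,
      Pi.single_apply, mul_ite, Finset.sum_ite_eq, Finset.mem_univ, if_true,
      Finset.univ_unique, Finset.sum_singleton, add_zero,
      Finset.sum_neg_distrib] at h
    simp only [Matrix.mulVec, dotProduct, Matrix.transpose_apply, hw, hμ, hy,
      mul_sub, Finset.sum_sub_distrib]
    simp only [mul_comm] at h ⊢
    linarith
  have claim2 : -(w ⬝ᵥ (A *ᵥ x₀)) - μ ⬝ᵥ (M *ᵥ x₀) + σ = -γ := by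
    have h := congrFun hxxe (Sum.inr ())
    rw [Finset.sum_apply] at h
    simp only [hg₂, hb₂, Fintype.sum_sum_type, Sum.elim_inl, Sum.elim_inr,
      Pi.smul_apply, smul_eq_mul, mul_neg, mul_zero, mul_one,
      Finset.univ_unique, Finset.sum_singleton, add_zero, Finset.sum_const_zero,
      Finset.sum_neg_distrib, zero_add] at h
    simp only [dotProduct, hw, hμ, hσ, sub_mul, Finset.sum_sub_distrib]
    simp only [mul_comm] at h ⊢
    linarith
  have hy0 : 0 ≤ y := fun j => hxx0 (Sum.inr (Sum.inr (Sum.inl j)))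
  have hσ0 : (0:ℝ) ≤ σ := hxx0 (Sum.inr (Sum.inr (Sum.inr ())))
  have hcy : c = Aᵀ *ᵥ w + Mᵀ *ᵥ μ + y := by
    funext j
    simpa using (claim1 j).symm
  have hAdot : ∀ z : Fin n → ℝ, (Aᵀ *ᵥ w) ⬝ᵥ z = w ⬝ᵥ (A *ᵥ z) := fun z => by
    rw [Matrix.mulVec_transpose, ← Matrix.dotProduct_mulVec]
  have hMdot : ∀ z : Fin n → ℝ, (Mᵀ *ᵥ μ) ⬝ᵥ z = μ ⬝ᵥ (M *ᵥ z) := fun z => by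
    rw [Matrix.mulVec_transpose, ← Matrix.dotProduct_mulVec]
  have e1 : c ⬝ᵥ xs = w ⬝ᵥ (A *ᵥ x₀) + μ ⬝ᵥ (M *ᵥ x₀) + y ⬝ᵥ xs := by
    conv_lhs => rw [hcy]
    rw [add_dotProduct, add_dotProduct, hAdot, hMdot, hxsA, hxsM]
  have hyxs0 : 0 ≤ y ⬝ᵥ xs := dotProduct_nonneg' hy0 hxs0
  have hcomp : y ⬝ᵥ xs = 0 := le_antisymm (by linarith) hyxs0
  -- assemble
  refine ⟨-μ, ⟨y, hy0, ?_, ?_⟩, xs, ⟨?_, hxs0, ?_⟩, ?_⟩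
  · -- B *ᵥ y = B *ᵥ c
    have hbc : B *ᵥ c = B *ᵥ (Aᵀ *ᵥ w) + B *ᵥ (Mᵀ *ᵥ μ) + B *ᵥ y := by
      rw [hcy, Matrix.mulVec_add, Matrix.mulVec_add]
    rw [Matrix.mulVec_mulVec, Matrix.mulVec_mulVec, hBA, hBM, Matrix.zero_mulVec,
      Matrix.zero_mulVec, zero_add, zero_add] at hbc
    exact hbc.symm
  · -- M *ᵥ y = M *ᵥ c + -μ
    have hmc : M *ᵥ c = M *ᵥ (Aᵀ *ᵥ w) + M *ᵥ (Mᵀ *ᵥ μ) + M *ᵥ y := by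
      rw [hcy, Matrix.mulVec_add, Matrix.mulVec_add]
    rw [Matrix.mulVec_mulVec, Matrix.mulVec_mulVec, hMA, hMM, Matrix.zero_mulVec,
      Matrix.one_mulVec, zero_add] at hmc
    rw [hmc]
    abel
  · -- A *ᵥ xs = A *ᵥ d
    rw [hxsA, hx₀A]
  · -- optimality
    intro x' hx'A hx'0
    have hcost : c + Mᵀ *ᵥ (-μ) = y + Aᵀ *ᵥ w := by
      rw [hcy, Matrix.mulVec_neg]
      abel
    rw [hcost, add_dotProduct, add_dotProduct, hAdot, hAdot, hcomp,
      hx'A, hxsA, hx₀A]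
    have : 0 ≤ y ⬝ᵥ x' := dotProduct_nonneg' hy0 hx'0
    linarith
  · -- v = M *ᵥ (xs - d)
    rw [Matrix.mulVec_sub, hxsM, hx₀M]
    abel


/-- The union of `Φ(u)` over `u ∈ Θ_D` equals `Θ_P`, and symmetrically for `Ψ`. -/
theorem union_Phi_eq_ThetaP {m l r n : ℕ}
    (A : Matrix (Fin m) (Fin n) ℝ) (B : Matrix (Fin l) (Fin n) ℝ)
    (M : Matrix (Fin r) (Fin n) ℝ) (c d : Fin n → ℝ)
    (hd : 0 ≤ d) (hc : 0 ≤ c)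
    (hA1 : Assumption1 A B M) (hA2 : Assumption2 M) :
    (⋃ u ∈ ThetaD B M c, Phi A M c d u) = ThetaP A M d ∧
      (⋃ v ∈ ThetaP A M d, Psi B M c d v) = ThetaD B M c := by
  obtain ⟨h₁, h₂, h₃, -⟩ := hA1
  have hAB : A * Bᵀ = 0 := mul_transpose_eq_zero h₁
  have hAM : A * Mᵀ = 0 := mul_transpose_eq_zero h₂
  have hBM : B * Mᵀ = 0 := mul_transpose_eq_zero h₃
  have tr0 : ∀ {a b : ℕ} {P : Matrix (Fin a) (Fin n) ℝ} {Q : Matrix (Fin b) (Fin n) ℝ},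
      P * Qᵀ = 0 → Q * Pᵀ = 0 := by
    intro a b P Q h
    have := congrArg Matrix.transpose h
    simpa [Matrix.transpose_mul] using this
  have hBA : B * Aᵀ = 0 := tr0 hAB
  have hMA : M * Aᵀ = 0 := tr0 hAM
  have hMB : M * Bᵀ = 0 := tr0 hBM
  constructor
  · apply Set.Subset.antisymm
    · intro v hv
      simp only [Set.mem_iUnion] at hv
      obtain ⟨u, -, hv⟩ := hv
      exact phi_sub A M c d u hv
    · intro v hv
      obtain ⟨u, hu, hvu⟩ := key A B M c d hc hBA hBM hMA hA2 hv
      exact Set.mem_biUnion hu hvu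
  · apply Set.Subset.antisymm
    · intro u hu
      simp only [Set.mem_iUnion] at hu
      obtain ⟨v, -, hu⟩ := hu
      exact phi_sub B M d c v hu
    · intro u hu
      obtain ⟨v, hv, huv⟩ := key B A M d c hd hAB hAM hMB hA2 hu
      exact Set.mem_biUnion hv huv

end Main
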